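/- arXiv:2405.02932 — 11 statements merged into one kernel-verified Lean document; each statement's English description precedes it below -/
import Mathlib

section
/- For every natural number k and real x with -1 < x, the identity U'_{k+1}(x) - U'_k(x) = ((k+2)·U_k(x) + (k+1)·U_{k+1}(x)) / (1+x) holds. -/
open Polynomial Polynomial.Chebyshev

theorem stmt_1 (k : ℕ) (x : ℝ) (h1 : -1 < x) :
    (derivative (U ℝ ((k : ℤ) + 1))).eval x - (derivative (U ℝ (k : ℤ))).eval x =
      (((k : ℝ) + 2) * (U ℝ (k : ℤ)).eval x + ((k : ℝ) + 1) * (U ℝ ((k : ℤ) + 1)).eval x) /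
        (1 + x) := by
  have h0 := add_one_mul_T_eq_poly_in_U (R := ℝ) (k : ℤ)
  have h1' := add_one_mul_T_eq_poly_in_U (R := ℝ) ((k : ℤ) + 1)
  have h2 := T_eq_U_sub_X_mul_U ℝ ((k : ℤ) + 1)
  have h3 := T_eq_U_sub_X_mul_U ℝ ((k : ℤ) + 2)
  have h4 := U_add_two ℝ (k : ℤ)
  rw [show ((k:ℤ)+1-1) = (k:ℤ) from by ring] at h2
  rw [show ((k:ℤ)+2-1) = (k:ℤ)+1 from by ring] at h3
  have key : (1 + X) * (derivative (U ℝ ((k : ℤ) + 1)) - derivative (U ℝ (k : ℤ))) =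
      ((k : ℝ[X]) + 2) * U ℝ (k : ℤ) + ((k : ℝ[X]) + 1) * U ℝ ((k : ℤ) + 1) := by
    have hne : (1 - X : ℝ[X]) ≠ 0 := by
      intro h
      have := congrArg (eval 0) h
      simp at this
    apply mul_left_cancel₀ hne
    linear_combination (norm := (push_cast; ring_nf))
      h1' - h0 - ((k : ℝ[X]) + 2) * h3 + ((k : ℝ[X]) + 1) * h2 - ((k : ℝ[X]) + 2) * h4
  have hx : (1 : ℝ) + x ≠ 0 := by linarith
  have hk := congrArg (eval x) key
  simp only [eval_mul, eval_add, eval_sub, eval_one, eval_X, eval_natCast, eval_intCast,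
    eval_ofNat, Int.cast_natCast] at hk
  rw [eq_div_iff hx]
  linear_combination hk
end

section
/- For every natural number k and real x with x < 1, the identity U'_{k+1}(x) + U'_k(x) = ((k+2)·U_k(x) - (k+1)·U_{k+1}(x)) / (1-x) holds. -/
open Polynomial Polynomial.Chebyshev

lemma key_poly (n : ℤ) :
    (1 + (X : ℝ[X])) * ((1 - X) * (derivative (U ℝ (n + 1)) + derivative (U ℝ n))) =
      (1 + X) * (((n : ℝ[X]) + 2) * U ℝ n - ((n : ℝ[X]) + 1) * U ℝ (n + 1)) := by
  have H1 := add_one_mul_T_eq_poly_in_U (R := ℝ) n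
  have H2 := add_one_mul_T_eq_poly_in_U (R := ℝ) (n + 1)
  have h3 := T_eq_U_sub_X_mul_U (R := ℝ) (n + 1)
  have h4 := T_eq_U_sub_X_mul_U (R := ℝ) (n + 2)
  have h5 := U_add_two (R := ℝ) n
  linear_combination (norm := (push_cast; ring_nf))
    H1 + H2 - ((n : ℝ[X]) + 1) * h3 - ((n : ℝ[X]) + 2) * h4 - ((n : ℝ[X]) + 2) * h5

theorem stmt_2 (k : ℕ) (x : ℝ) (h2 : x < 1) :
    (derivative (U ℝ ((k : ℤ) + 1))).eval x + (derivative (U ℝ (k : ℤ))).eval x =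
      (((k : ℝ) + 2) * (U ℝ (k : ℤ)).eval x - ((k : ℝ) + 1) * (U ℝ ((k : ℤ) + 1)).eval x) /
        (1 - x) := by
  have hx : (1 : ℝ) - x ≠ 0 := by linarith
  have hne : (1 + (X : ℝ[X])) ≠ 0 := by
    intro h
    have := congr_arg (Polynomial.eval 0) h
    simp at this
  have hp := mul_left_cancel₀ hne (key_poly (k : ℤ))
  have he := congr_arg (Polynomial.eval x) hp
  simp only [eval_mul, eval_sub, eval_add, eval_one, eval_X, eval_intCast, Int.cast_natCast,
    eval_ofNat] at he
  rw [eq_div_iff hx]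
  simp only [eval_intCast, eval_natCast] at he
  linarith [he]
end

section
/- For every natural number k and real x with -1 < x < 1, the identity (U'_{k+1}(x))² - (U'_k(x))² = ((k+2)²·(U_k(x))² - (k+1)²·(U_{k+1}(x))²) / (1-x²) holds. -/
open Polynomial Polynomial.Chebyshev

theorem stmt_3 (k : ℕ) (x : ℝ) (h1 : -1 < x) (h2 : x < 1) :
    ((derivative (U ℝ ((k : ℤ) + 1))).eval x) ^ 2 - ((derivative (U ℝ (k : ℤ))).eval x) ^ 2 =
      (((k : ℝ) + 2) ^ 2 * ((U ℝ (k : ℤ)).eval x) ^ 2 -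
        ((k : ℝ) + 1) ^ 2 * ((U ℝ ((k : ℤ) + 1)).eval x) ^ 2) / (1 - x ^ 2) := by
  have hne : (1 : ℝ) - x ^ 2 ≠ 0 := by nlinarith
  -- evaluated identities
  have E0 := congrArg (Polynomial.eval x) (add_one_mul_T_eq_poly_in_U (R := ℝ) (k : ℤ))
  have E1 := congrArg (Polynomial.eval x) (add_one_mul_T_eq_poly_in_U (R := ℝ) ((k : ℤ) + 1))
  have F0 := congrArg (Polynomial.eval x) (T_eq_U_sub_X_mul_U ℝ ((k : ℤ) + 1))
  have F1 := congrArg (Polynomial.eval x) (T_eq_U_sub_X_mul_U ℝ ((k : ℤ) + 2))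
  have G := congrArg (Polynomial.eval x) (U_add_two ℝ (k : ℤ))
  simp only [eval_mul, eval_add, eval_sub, eval_one, eval_pow, eval_X, eval_intCast,
    eval_ofNat, eval_natCast, Int.cast_add, Int.cast_natCast, Int.cast_one,
    show ((k:ℤ)+2-1) =(k:ℤ)+1 from by ring, show ((k:ℤ)+1+1) = (k:ℤ)+2 from by ring,
    add_sub_cancel_right] at E0 E1 F0 F1 G
  set a := (U ℝ (k : ℤ)).eval x with ha
  set b := (U ℝ ((k : ℤ) + 1)).eval x with hb
  set c := (U ℝ ((k : ℤ) + 2)).eval x with hc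
  set d0 := (derivative (U ℝ (k : ℤ))).eval x with hd0
  set d1 := (derivative (U ℝ ((k : ℤ) + 1))).eval x with hd1
  have key0 : (1 - x ^ 2) * d0 = ((k : ℝ) + 2) * x * a - ((k : ℝ) + 1) * b := by
    linear_combination E0 - ((k:ℝ)+1) * F0
  have key1 : (1 - x ^ 2) * d1 = ((k : ℝ) + 2) * a - ((k : ℝ) + 1) * x * b := by
    linear_combination E1 - ((k:ℝ)+2) * F1 - ((k:ℝ)+2) * G
  rw [eq_div_iff hne]
  apply mul_left_cancel₀ hne
  linear_combination ((1 - x^2)*d1 + (((k:ℝ)+2)*a - ((k:ℝ)+1)*x*b)) * key1 -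
    ((1 - x^2)*d0 + (((k:ℝ)+2)*x*a - ((k:ℝ)+1)*b)) * key0
end

section
/- For every natural number k and real x with -1 < x ≤ 1, the identity U_k(x) = (√2 / (2·√(1+x))) · U_{2k+1}(√((1+x)/2)) holds. -/
/-! With `y = cos θ`, `U_{2n+1}(y) = sin((2n+2)θ) / sin θ = 2 cos θ · U_n(cos 2θ)`, i.e.
`U_{2n+1} = 2X · U_n ∘ T_2` as polynomials; this is proved from the recurrence, using that the
even-step recurrence `U_{m+4} = 2 T_2 U_{m+2} - U_m` has the same shape as the recurrence for `U_n`
with `X` replaced by `T_2`. Evaluating at `y = √((1 + x) / 2)`, where `T_2(y) = x`, gives the claim. -/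

open Polynomial Polynomial.Chebyshev

namespace Polynomial.Chebyshev

variable (R : Type*) [CommRing R]

theorem U_add_four (n : ℤ) : U R (n + 4) = 2 * T R 2 * U R (n + 2) - U R n := by
  have h₀ := U_add_two R n
  have h₁ := U_add_two R (n + 1)
  have h₂ := U_add_two R (n + 2)
  rw [T_two]
  linear_combination (norm := ring_nf) h₂ + 2 * X * h₁ + h₀

theorem U_two_mul_add_one (n : ℤ) : U R (2 * n + 1) = 2 * X * (U R n).comp (T R 2) := by
  induction n using Polynomial.Chebyshev.induct with
  | zero => simp
  | one =>
    have h := U_add_two R 1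
    norm_num [U_two] at h
    norm_num [U_one, T_two]
    linear_combination h
  | add_two n ih₁ ih₀ =>
    have h := U_add_four R (2 * n + 1)
    have hc := congrArg (·.comp (T R 2)) (U_add_two R n)
    simp only [sub_comp, mul_comp, ofNat_comp, X_comp] at hc
    rw [show 2 * ((n : ℤ) + 2) + 1 = 2 * n + 1 + 4 by ring, h, hc,
      show 2 * (n : ℤ) + 1 + 2 = 2 * (n + 1) + 1 by ring, ih₁, ih₀]
    ring
  | neg_add_one n ih₀ ih₁ =>
    have h := U_add_four R (2 * (-n - 1) + 1)
    have hc := congrArg (·.comp (T R 2)) (U_add_two R (-n - 1))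
    simp only [sub_comp, mul_comp, ofNat_comp, X_comp] at hc
    rw [show 2 * (-(n : ℤ) - 1) + 1 + 4 = 2 * (-n + 1) + 1 by ring,
      show 2 * (-(n : ℤ) - 1) + 1 + 2 = 2 * -n + 1 by ring, ih₀, ih₁] at h
    rw [show -(n : ℤ) - 1 + 2 = -n + 1 by ring, show -(n : ℤ) - 1 + 1 = -n by ring] at hc
    linear_combination h - 2 * X * hc

theorem U_two_mul_add_one_eval (n : ℤ) (y : R) :
    (U R (2 * n + 1)).eval y = 2 * y * (U R n).eval (2 * y ^ 2 - 1) := by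
  simp [U_two_mul_add_one, T_two]

end Polynomial.Chebyshev

theorem stmt_4_general (k : ℕ) (x : ℝ) (h1 : -1 < x) :
    (U ℝ (k : ℤ)).eval x =
      (Real.sqrt 2 / (2 * Real.sqrt (1 + x))) *
        (U ℝ (2 * (k : ℤ) + 1)).eval (Real.sqrt ((1 + x) / 2)) := by
  have hx : 0 < 1 + x := by linarith
  set y := Real.sqrt ((1 + x) / 2) with hy
  have hy_sq : y ^ 2 = (1 + x) / 2 := Real.sq_sqrt (by positivity)
  have hxy : 2 * y ^ 2 - 1 = x := by rw [hy_sq]; ring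
  have hsqrt : Real.sqrt 2 * y = Real.sqrt (1 + x) := by
    rw [hy, ← Real.sqrt_mul zero_le_two]
    ring_nf
  have hcoef : Real.sqrt 2 / (2 * Real.sqrt (1 + x)) * (2 * y) = 1 := by
    field_simp
    linear_combination hsqrt
  rw [U_two_mul_add_one_eval, hxy, ← mul_assoc, hcoef, one_mul]

theorem stmt_4 (k : ℕ) (x : ℝ) (h1 : -1 < x) (h2 : x ≤ 1) :
    (U ℝ (k : ℤ)).eval x =
      (Real.sqrt 2 / (2 * Real.sqrt (1 + x))) *
        (U ℝ (2 * (k : ℤ) + 1)).eval (Real.sqrt ((1 + x) / 2)) :=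
  stmt_4_general k x h1
end

section
/- For every natural number k and real x with -1 ≤ x < 1, the identity U_k(x) = ((-1)^k · √2 / (2·√(1-x))) · U_{2k+1}(√((1-x)/2)) holds. -/
/-!
Since `T₂ = 2X² - 1`, both `U_{2n+1}` and `2X · U_n(T₂)` satisfy the step-two recurrence
`V_{n+1} + V_{n-1} = 2 T₂ V_n` and agree at `n = 0, 1`, so `U_{2k+1}(y) = 2y · U_k(2y² - 1)`.
For `y = √((1 - x)/2)` we have `2y² - 1 = -x` and `√2 · y = √(1 - x)`, and the sign comes from
`U_k(-x) = (-1)^k U_k(x)`.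
-/

open Polynomial Polynomial.Chebyshev

namespace Polynomial.Chebyshev

variable (R : Type*) [CommRing R]

theorem U_add_two_add_U_sub_two (n : ℤ) : U R (n + 2) + U R (n - 2) = 2 * T R 2 * U R n := by
  have h₂ := U_add_one R (n + 1)
  have h₁ := U_add_one R n
  have h₀ := U_sub_one R (n - 1)
  rw [add_assoc, one_add_one_eq_two, add_sub_cancel_right] at h₂
  rw [sub_sub, one_add_one_eq_two, sub_add_cancel] at h₀
  rw [T_two]
  linear_combination h₂ + 2 * X * h₁ + h₀

end Polynomial.Chebyshev

theorem stmt_5_general (k : ℕ) (x : ℝ) (h2 : x < 1) :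
    (U ℝ (k : ℤ)).eval x =
      ((-1 : ℝ) ^ k * Real.sqrt 2 / (2 * Real.sqrt (1 - x))) *
        (U ℝ (2 * (k : ℤ) + 1)).eval (Real.sqrt ((1 - x) / 2)) := by
  set y := Real.sqrt ((1 - x) / 2)
  have hy : 2 * y ^ 2 - 1 = -x := by
    rw [Real.sq_sqrt (by linarith)]; ring
  have hy_mul : Real.sqrt 2 * y = Real.sqrt (1 - x) := by
    rw [← Real.sqrt_mul zero_le_two]; ring_nf
  have hpos : 0 < Real.sqrt (1 - x) := Real.sqrt_pos.2 (by linarith)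
  have hsign : ((-1 : ℝ) ^ k) ^ 2 = 1 := by rw [← pow_mul, mul_comm, pow_mul, neg_one_sq, one_pow]
  rw [U_two_mul_add_one_eval, hy, U_eval_neg, Int.cast_negOnePow_natCast]
  field_simp
  rw [hsign, mul_one, mul_assoc, hy_mul]

theorem stmt_5 (k : ℕ) (x : ℝ) (h1 : -1 ≤ x) (h2 : x < 1) :
    (U ℝ (k : ℤ)).eval x =
      ((-1 : ℝ) ^ k * Real.sqrt 2 / (2 * Real.sqrt (1 - x))) *
        (U ℝ (2 * (k : ℤ) + 1)).eval (Real.sqrt ((1 - x) / 2)) :=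
  stmt_5_general k x h2
end

section
/- For every natural number k and real x with -1 < x < 1, the identity U'_{k+1}(x) + U'_k(x) = (√2 / (4·√(1+x))) · U'_{2k+2}(√((1+x)/2)) holds. -/
open Polynomial Polynomial.Chebyshev

lemma key (k : ℕ) : ((U ℝ ((k:ℤ)+1) + U ℝ (k:ℤ)).comp (2*X^2-1)) = U ℝ (2*(k:ℤ)+2) := by
  induction k using Nat.twoStepInduction with
  | zero =>
    simp [U_one, U_zero, U_two]
    ring
  | one =>
    have h4 : U ℝ (4:ℤ) = 2*X*U ℝ 3 - U ℝ 2 := by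
      have := U_add_two ℝ 2; norm_num at this ⊢; linear_combination this
    have h3 : U ℝ (3:ℤ) = 2*X*U ℝ 2 - U ℝ 1 := by
      have := U_add_two ℝ 1; norm_num at this ⊢; linear_combination this
    push_cast
    rw [h4, h3]
    simp [U_one, U_two]
    ring
  | more n ih1 ih2 =>
    push_cast at ih1 ih2 ⊢
    set c : ℝ[X] := 2*X^2-1 with hc
    have comp1 : ∀ m : ℤ, (U ℝ (m+2)).comp c = 2*c*((U ℝ (m+1)).comp c) - (U ℝ m).comp c := by
      intro m
      rw [U_add_two]
      simp [sub_comp, mul_comp]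
    have hc1 : (U ℝ ((n:ℤ)+2+1)).comp c = 2*c*((U ℝ ((n:ℤ)+2)).comp c) - (U ℝ ((n:ℤ)+1)).comp c := by
      have := comp1 ((n:ℤ)+1); rw [show (n:ℤ)+1+2 = (n:ℤ)+2+1 by ring, show (n:ℤ)+1+1 = (n:ℤ)+2 by ring] at this; exact this
    have hc2 : (U ℝ ((n:ℤ)+2)).comp c = 2*c*((U ℝ ((n:ℤ)+1)).comp c) - (U ℝ (n:ℤ)).comp c := comp1 (n:ℤ)
    have f1 : U ℝ (2*(n:ℤ)+2+2+2) = 2*X*U ℝ (2*n+5) - U ℝ (2*n+4) := by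
      have := U_add_two ℝ (2*n+4); linear_combination (norm := ring_nf) this
    have f2 : U ℝ (2*(n:ℤ)+5) = 2*X*U ℝ (2*n+4) - U ℝ (2*n+3) := by
      have := U_add_two ℝ (2*n+3); linear_combination (norm := ring_nf) this
    have f3 : U ℝ (2*(n:ℤ)+4) = 2*X*U ℝ (2*n+3) - U ℝ (2*n+2) := by
      have := U_add_two ℝ (2*n+2); linear_combination (norm := ring_nf) this
    have g2 : (2:ℤ)*((n:ℤ)+1)+2 = 2*n+4 := by ring
    rw [g2, show (n:ℤ)+1+1 = (n:ℤ)+2 by ring] at ih2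
    rw [show (2*((n:ℤ)+2)+2) = 2*(n:ℤ)+2+2+2 by ring, show ((n:ℤ)+2+1) = ((n:ℤ)+2)+1 by ring]
    simp only [add_comp] at ih1 ih2 ⊢
    rw [hc, show ((2:ℝ[X])*X^2-1) = c from rfl] at *
    linear_combination hc1 + hc2 - ih1 + (4*X^2-2)*ih2 - f1 - 2*X*f2 - f3

theorem stmt_6 (k : ℕ) (x : ℝ) (h1 : -1 < x) (h2 : x < 1) :
    (derivative (U ℝ ((k : ℤ) + 1))).eval x + (derivative (U ℝ (k : ℤ))).eval x =
      (Real.sqrt 2 / (4 * Real.sqrt (1 + x))) *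
        (derivative (U ℝ (2 * (k : ℤ) + 2))).eval (Real.sqrt ((1 + x) / 2)) := by
  have hx : (0:ℝ) < 1 + x := by linarith
  set y := Real.sqrt ((1+x)/2) with hy
  have hy2 : y^2 = (1+x)/2 := Real.sq_sqrt (by linarith)
  have hk := congrArg derivative (key k)
  rw [derivative_comp] at hk
  have hev := congrArg (Polynomial.eval y) hk
  simp only [eval_mul, eval_comp, derivative_sub, derivative_mul, derivative_add,
    derivative_X_pow, derivative_one, derivative_ofNat, eval_add, eval_sub, eval_pow,
    eval_X, eval_ofNat, eval_one, eval_natCast, eval_zero, eval_C, Nat.cast_ofNat, zero_mul, zero_add, sub_zero,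
    show (2-1 : ℕ) = 1 from rfl, pow_one] at hev
  have hqx : 2 * y ^ 2 - 1 = x := by rw [hy2]; ring
  rw [hqx] at hev
  have hyv : y = Real.sqrt (1+x) / Real.sqrt 2 := by
    rw [hy, show (1+x)/2 = (1+x)/2 from rfl, Real.sqrt_div hx.le]
  have hs2 : Real.sqrt 2 > 0 := by positivity
  have hsx : Real.sqrt (1+x) > 0 := Real.sqrt_pos.2 hx
  have h22 : Real.sqrt 2 * Real.sqrt 2 = 2 := Real.mul_self_sqrt (by norm_num)
  rw [← hev, hyv]
  field_simp
  ring_nf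
end

section
/- For every natural number k and real x with -1 < x < 1, the identity (U'_{k+1}(x))² - (U'_k(x))² = ((-1)^k / (8·√(1-x²))) · U'_{2k+2}(√((1+x)/2)) · U'_{2k+2}(√((1-x)/2)) holds. -/
open Polynomial Polynomial.Chebyshev

open Polynomial Polynomial.Chebyshev Real



lemma key2 (Kr sa ca sf cf e : ℝ) (h1 : sa^2 + ca^2 = 1) (h2 : sf^2 + cf^2 = 1)
    (he : e^2 = 1) (hsf : sf ≠ 0) (hcf : cf ≠ 0) :
    (((cf^2 - sf^2) * (sa*(cf^2-sf^2) + ca*(2*sf*cf)) -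
        (Kr+2) * (ca*(cf^2-sf^2) - sa*(2*sf*cf)) * (2*sf*cf)) / (2*sf*cf)^3)^2 -
      (((cf^2 - sf^2) * sa - (Kr+1) * ca * (2*sf*cf)) / (2*sf*cf)^3)^2 =
    e / (8 * (2*sf*cf)) *
      ((cf*(sa*cf + ca*sf) - (2*Kr+3) * (ca*cf - sa*sf) * sf) / sf^3) *
      ((e * ((2*Kr+3) * cf * (sa*cf + ca*sf) - sf * (ca*cf - sa*sf))) / cf^3) := by
  have key : ((cf^2 - sf^2) * (sa*(cf^2-sf^2) + ca*(2*sf*cf)) -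
        (Kr+2) * (ca*(cf^2-sf^2) - sa*(2*sf*cf)) * (2*sf*cf))^2 -
      ((cf^2 - sf^2) * sa - (Kr+1) * ca * (2*sf*cf))^2 =
      (2*sf*cf)^2 * (cf*(sa*cf + ca*sf) - (2*Kr+3) * (ca*cf - sa*sf) * sf) *
        ((2*Kr+3) * cf * (sa*cf + ca*sf) - sf * (ca*cf - sa*sf)) := by
    linear_combination
      ((-4)*sf^2*cf^2 + (-8)*sf^2*cf^2*Kr + (-4)*sf^2*cf^2*Kr^2 + (4)*sf^2*cf^6 + (8)*sf^2*cf^6*Kr + (4)*sf^2*cf^6*Kr^2 + (8)*sf^4*cf^4 + (16)*sf^4*cf^4*Kr + (8)*sf^4*cf^4*Kr^2 + (4)*sf^6*cf^2 + (8)*sf^6*cf^2*Kr + (4)*sf^6*cf^2*Kr^2) * h1 +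
      ((4)*sf^2*cf^2 + (8)*sf^2*cf^2*Kr + (4)*sf^2*cf^2*Kr^2 + (4)*sf^2*cf^4 + (8)*sf^2*cf^4*Kr + (4)*sf^2*cf^4*Kr^2 + (4)*sf^4*cf^2 + (8)*sf^4*cf^2*Kr + (4)*sf^4*cf^2*Kr^2 + (-4)*sa*ca*sf*cf^3 + (-4)*sa*ca*sf*cf^3*Kr + (-4)*sa*ca*sf*cf^5 + (-4)*sa*ca*sf*cf^5*Kr + (4)*sa*ca*sf^3*cf + (4)*sa*ca*sf^3*cf*Kr + (4)*sa*ca*sf^5*cf + (4)*sa*ca*sf^5*cf*Kr + (1)*sa^2*cf^4 + (1)*sa^2*cf^6 + (-6)*sa^2*sf^2*cf^2 + (-8)*sa^2*sf^2*cf^2*Kr + (-4)*sa^2*sf^2*cf^2*Kr^2 + (-5)*sa^2*sf^2*cf^4 + (-8)*sa^2*sf^2*cf^4*Kr + (-4)*sa^2*sf^2*cf^4*Kr^2 + (1)*sa^2*sf^4 + (-5)*sa^2*sf^4*cf^2 + (-8)*sa^2*sf^4*cf^2*Kr + (-4)*sa^2*sf^4*cf^2*Kr^2 + (1)*sa^2*sf^6)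 * h2
  have hS : (2*sf*cf) ≠ 0 := by positivity
  rw [div_pow, div_pow, div_sub_div_same, div_mul_div_comm, div_mul_div_comm,
    div_eq_div_iff (by positivity) (by positivity)]
  linear_combination (8 * (2*sf*cf) * sf^3 * cf^3) * key -
    (64*sf^6*cf^6 * (cf*(sa*cf + ca*sf) - (2*Kr+3) * (ca*cf - sa*sf) * sf) *
      ((2*Kr+3) * cf * (sa*cf + ca*sf) - sf * (ca*cf - sa*sf))) * he


lemma evalU' (n : ℤ) (θ : ℝ) (h : Real.sin θ ≠ 0) :
    (derivative (U ℝ n)).eval (Real.cos θ) =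
      (Real.cos θ * Real.sin (((n : ℝ) + 1) * θ) -
        ((n : ℝ) + 1) * Real.cos (((n : ℝ) + 1) * θ) * Real.sin θ) / Real.sin θ ^ 3 := by
  have H := congrArg (Polynomial.eval (Real.cos θ)) (add_one_mul_T_eq_poly_in_U (R := ℝ) n)
  simp only [eval_mul, eval_add, eval_sub, eval_one, eval_X, eval_pow, eval_intCast,
    T_real_cos] at H
  have hU : (U ℝ n).eval (Real.cos θ) = Real.sin (((n : ℝ) + 1) * θ) / Real.sin θ := by
    rw [eq_div_iff h]; exact_mod_cast U_real_cos θ n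
  have hpyth : Real.sin θ ^ 2 + Real.cos θ ^ 2 = 1 := Real.sin_sq_add_cos_sq θ
  rw [hU] at H
  push_cast at H
  field_simp at H
  rw [eq_div_iff (pow_ne_zero 3 h)]
  linear_combination H + (Polynomial.eval (Real.cos θ) (derivative (U ℝ n))) * Real.sin θ * hpyth

theorem stmt_7 (k : ℕ) (x : ℝ) (h1 : -1 < x) (h2 : x < 1) :
    ((derivative (U ℝ ((k : ℤ) + 1))).eval x) ^ 2 - ((derivative (U ℝ (k : ℤ))).eval x) ^ 2 =
      ((-1 : ℝ) ^ k / (8 * Real.sqrt (1 - x ^ 2))) *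
        (derivative (U ℝ (2 * (k : ℤ) + 2))).eval (Real.sqrt ((1 + x) / 2)) *
        (derivative (U ℝ (2 * (k : ℤ) + 2))).eval (Real.sqrt ((1 - x) / 2)) := by
  set θ := Real.arccos x with hθdef
  have hc : Real.cos θ = x := Real.cos_arccos h1.le h2.le
  have hθ0 : 0 < θ := Real.arccos_pos.mpr h2
  have hθπ : θ < π := lt_of_le_of_ne (Real.arccos_le_pi x) (fun h => by
    have : Real.cos θ = -1 := by rw [h, Real.cos_pi]
    rw [hc] at this; linarith)
  have hpi := Real.pi_pos
  set sf := Real.sin (θ/2) with hsfdef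
  set cf := Real.cos (θ/2) with hcfdef
  set sa := Real.sin (((k:ℝ)+1)*θ) with hsadef
  set ca := Real.cos (((k:ℝ)+1)*θ) with hcadef
  have hsf : 0 < sf := Real.sin_pos_of_pos_of_lt_pi (by linarith) (by linarith)
  have hcf : 0 < cf := Real.cos_pos_of_mem_Ioo ⟨by linarith, by linarith⟩
  have hne : Real.sin θ ≠ 0 := (Real.sin_pos_of_pos_of_lt_pi hθ0 hθπ).ne'
  have hne2 : Real.sin (θ/2) ≠ 0 := hsf.ne'
  have hne3 : Real.sin (π/2 - θ/2) ≠ 0 := by rw [Real.sin_pi_div_two_sub]; exact hcf.ne'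
  have hsin2 : Real.sin θ = 2*sf*cf := by
    have h := Real.sin_two_mul (θ/2); rw [show 2*(θ/2) = θ by ring] at h
    rw [h]
  have hcos2 : Real.cos θ = cf^2 - sf^2 := by
    have h := Real.cos_two_mul (θ/2); rw [show 2*(θ/2) = θ by ring] at h
    have hp := Real.sin_sq_add_cos_sq (θ/2)
    linear_combination h + hp
  -- rewrite the three evaluation points
  have hp1 : Real.sqrt ((1 + x) / 2) = Real.cos (θ/2) := by
    rw [← hc]; exact (Real.cos_half (by linarith) hθπ.le).symm
  have hp2 : Real.sqrt ((1 - x) / 2) = Real.cos (π/2 - θ/2) := by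
    rw [Real.cos_pi_div_two_sub, ← hc]
    exact (Real.sin_half_eq_sqrt hθ0.le (by linarith)).symm
  have hp3 : Real.sqrt (1 - x^2) = 2*sf*cf := by
    rw [← hc, ← hsin2, ← Real.sin_arccos, hc, hθdef]
  rw [hp1, hp2, hp3, ← hc]
  rw [evalU' ((k:ℤ)+1) θ hne, evalU' (k:ℤ) θ hne,
      evalU' (2*(k:ℤ)+2) (θ/2) hne2, evalU' (2*(k:ℤ)+2) (π/2 - θ/2) hne3]
  push_cast
  rw [show ((k:ℝ)+1+1)*θ = ((k:ℝ)+1)*θ + θ by ring,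
      show (2*(k:ℝ)+2+1)*(θ/2) = ((k:ℝ)+1)*θ + θ/2 by ring,
      show (2*(k:ℝ)+2+1)*(π/2 - θ/2) = ((k+2:ℕ):ℝ)*π - (π/2 + (((k:ℝ)+1)*θ + θ/2)) by
        push_cast; ring,
      Real.sin_nat_mul_pi_sub, Real.cos_nat_mul_pi_sub,
      Real.sin_pi_div_two_sub, Real.cos_pi_div_two_sub]
  simp only [Real.sin_add, Real.cos_add, Real.sin_pi_div_two, Real.cos_pi_div_two]
  rw [hsin2, hcos2, ← hsadef, ← hcadef, ← hsfdef, ← hcfdef]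
  have hpa : sa^2 + ca^2 = 1 := Real.sin_sq_add_cos_sq _
  have hpf : sf^2 + cf^2 = 1 := Real.sin_sq_add_cos_sq _
  have he : ((-1:ℝ)^k)^2 = 1 := by rw [← pow_mul, mul_comm, pow_mul]; norm_num
  have K := key2 (k:ℝ) sa ca sf cf ((-1)^k) hpa hpf he hsf.ne' hcf.ne'
  linear_combination K
end

section
/- Let n > 2 be an even integer. If x_min is the smallest positive root of U'_n(x) = 0, then x_min < sin(π/n). -/
set_option maxHeartbeats 1000000

open Polynomial Polynomial.Chebyshev

lemma keyU (n : ℤ) (t : ℝ) :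
    (derivative (U ℝ n)).eval (Real.cos t) * (Real.sin t)^3
      = Real.sin (((n:ℝ)+1)*t) * Real.cos t
        - ((n:ℝ)+1) * Real.cos (((n:ℝ)+1)*t) * Real.sin t := by
  have hL : HasDerivAt (fun x : ℝ => (U ℝ n).eval (Real.cos x) * Real.sin x)
      (((derivative (U ℝ n)).eval (Real.cos t) * (-Real.sin t)) * Real.sin t
        + (U ℝ n).eval (Real.cos t) * Real.cos t) t :=
    (((U ℝ n).hasDerivAt (Real.cos t)).comp t (Real.hasDerivAt_cos t)).mul
      (Real.hasDerivAt_sin t)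
  have hfun : (fun x : ℝ => (U ℝ n).eval (Real.cos x) * Real.sin x)
      = fun x => Real.sin (((n:ℝ)+1)*x) := funext fun x => U_real_cos x n
  rw [hfun] at hL
  have hR : HasDerivAt (fun x : ℝ => Real.sin (((n:ℝ)+1)*x))
      (Real.cos (((n:ℝ)+1)*t) * (((n:ℝ)+1) * 1)) t :=
    (Real.hasDerivAt_sin (((n:ℝ)+1)*t)).comp t ((hasDerivAt_id t).const_mul ((n:ℝ)+1))
  have h := hL.unique hR
  have hU := U_real_cos t n
  linear_combination (-Real.sin t) * h + Real.cos t * hU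

theorem stmt_8 (n : ℕ) (hn2 : 2 < n) (hne : Even n) (xmin : ℝ)
    (hpos : 0 < xmin) (hroot : (derivative (U ℝ (n : ℤ))).eval xmin = 0)
    (hmin : ∀ y : ℝ, 0 < y → (derivative (U ℝ (n : ℤ))).eval y = 0 → xmin ≤ y) :
    xmin < Real.sin (Real.pi / n) := by
  obtain ⟨m, hm⟩ := hne
  have hπ := Real.pi_pos
  have hnR : (n:ℝ) = 2*(m:ℝ) := by rw [hm]; push_cast; ring
  have hn0 : (0:ℝ) < n := by
    have : 0 < n := by omega
    exact_mod_cast this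
  have hn2R : (2:ℝ) < n := by exact_mod_cast hn2
  set s1 : ℝ := Real.pi/((n:ℝ)+1) with hs1def
  set s2 : ℝ := Real.pi/(n:ℝ) with hs2def
  have hs1pos : 0 < s1 := by positivity
  have hs2pos : 0 < s2 := by positivity
  have hs12 : s1 < s2 := by
    apply div_lt_div_of_pos_left hπ hn0
    linarith
  have hs2lt : s2 < Real.pi/2 := by
    apply div_lt_div_of_pos_left hπ (by norm_num)
    exact hn2R
  have hs1lt : s1 < Real.pi/2 := hs12.trans hs2lt
  -- trig positivity
  have hsin1 : 0 < Real.sin s1 := Real.sin_pos_of_pos_of_lt_pi hs1pos (by linarith)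
  have hsin2 : 0 < Real.sin s2 := Real.sin_pos_of_pos_of_lt_pi hs2pos (by linarith)
  have hcos1 : 0 < Real.cos s1 := Real.cos_pos_of_mem_Ioo ⟨by linarith, hs1lt⟩
  have hcos2 : 0 < Real.cos s2 := Real.cos_pos_of_mem_Ioo ⟨by linarith, hs2lt⟩
  have hx12 : Real.sin s1 < Real.sin s2 := by
    apply Real.strictMonoOn_sin ⟨by linarith, by linarith⟩ ⟨by linarith, by linarith⟩ hs12
  -- angle computations
  have hε : Real.cos ((m:ℝ)*Real.pi)^2 = 1 := by
    have h1 := Real.sin_sq_add_cos_sq ((m:ℝ)*Real.pi)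
    rw [Real.sin_nat_mul_pi] at h1
    linarith
  set ε : ℝ := Real.cos ((m:ℝ)*Real.pi) with hεdef
  have hA1 : ((n:ℝ)+1) * (Real.pi/2 - s1) = (m:ℝ)*Real.pi - Real.pi/2 := by
    rw [hs1def, hnR]
    field_simp
    ring
  have hm0 : (m:ℝ) ≠ 0 := by
    have : 0 < m := by omega
    positivity
  have hA2 : ((n:ℝ)+1) * (Real.pi/2 - s2) = (m:ℝ)*Real.pi - (Real.pi/2 + s2) := by
    rw [hs2def, hnR]
    field_simp
    ring
  have key1 := keyU n (Real.pi/2 - s1)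
  have key2 := keyU n (Real.pi/2 - s2)
  push_cast at key1 key2
  rw [hA1, Real.sin_pi_div_two_sub, Real.cos_pi_div_two_sub] at key1
  rw [hA2, Real.sin_pi_div_two_sub, Real.cos_pi_div_two_sub] at key2
  rw [Real.sin_sub, Real.cos_sub, Real.sin_nat_mul_pi, ← hεdef] at key1
  rw [Real.sin_sub, Real.cos_sub, Real.sin_nat_mul_pi, ← hεdef,
    Real.sin_add, Real.cos_add, Real.sin_pi_div_two, Real.cos_pi_div_two] at key2
  simp only [Real.sin_pi_div_two, Real.cos_pi_div_two] at key1
  -- key1 : F (sin s1) * cos s1 ^ 3 = -ε * sin s1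
  -- key2 : F (sin s2) * cos s2 ^ 3 = ε * n * sin s2 * cos s2
  set F : ℝ → ℝ := fun x => (derivative (U ℝ (n:ℤ))).eval x with hF
  have hprod : F (Real.sin s1) * F (Real.sin s2) < 0 := by
    have h1 : F (Real.sin s1) * Real.cos s1 ^ 3 = -ε * Real.sin s1 := by
      rw [hF]; linear_combination key1
    have h2 : F (Real.sin s2) * Real.cos s2 ^ 3 = ε * ((n:ℝ) * (Real.sin s2 * Real.cos s2)) := by
      rw [hF]; linear_combination key2
    have hc3 : 0 < Real.cos s1 ^ 3 * Real.cos s2 ^ 3 := by positivity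
    have hAB : F (Real.sin s1) * F (Real.sin s2) * (Real.cos s1 ^ 3 * Real.cos s2 ^ 3)
        = -((n:ℝ) * (Real.sin s1 * (Real.sin s2 * Real.cos s2))) := by
      have e : F (Real.sin s1) * F (Real.sin s2) * (Real.cos s1 ^ 3 * Real.cos s2 ^ 3)
          = (F (Real.sin s1) * Real.cos s1 ^ 3) * (F (Real.sin s2) * Real.cos s2 ^ 3) := by ring
      rw [e, h1, h2]
      linear_combination (-(n:ℝ) * Real.sin s1 * Real.sin s2 * Real.cos s2) * hε
    have hX : 0 < (n:ℝ) * (Real.sin s1 * (Real.sin s2 * Real.cos s2)) :=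
      mul_pos hn0 (mul_pos hsin1 (mul_pos hsin2 hcos2))
    nlinarith [hAB, hX, hc3]
  have hcont : ContinuousOn F (Set.Icc (Real.sin s1) (Real.sin s2)) :=
    (Polynomial.continuous _).continuousOn
  have hgoal : Real.sin s2 = Real.sin (Real.pi / n) := by rw [hs2def]
  obtain ⟨c, hc, hFc⟩ : ∃ c ∈ Set.Ioo (Real.sin s1) (Real.sin s2), F c = 0 := by
    rcases lt_or_ge (F (Real.sin s1)) 0 with h | h
    · have h2 : 0 < F (Real.sin s2) := by nlinarith
      obtain ⟨c, hc, hFc⟩ := intermediate_value_Ioo hx12.le hcont ⟨h, h2⟩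
      exact ⟨c, hc, hFc⟩
    · have h1 : 0 < F (Real.sin s1) := by
        rcases h.lt_or_eq with h | h
        · exact h
        · exfalso; rw [← h] at hprod; simp at hprod
      have h2 : F (Real.sin s2) < 0 := by nlinarith
      obtain ⟨c, hc, hFc⟩ := intermediate_value_Ioo' hx12.le hcont ⟨h2, h1⟩
      exact ⟨c, hc, hFc⟩
  have hcpos : 0 < c := hsin1.trans hc.1
  have := hmin c hcpos hFc
  rw [← hgoal]
  exact lt_of_le_of_lt this hc.2
end

section
/- Let n > 2 be an even integer. Then U'_n(x) > 0 for all x in the open interval (cos(π/n), 1); consequently every root of U'_n is at most cos(π/n). -/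
/-!
For `x = cos t` with `0 < t < π / n`, differentiating `U_n(cos t) sin t = sin((n+1)t)` gives
`U'_n(cos t) sin³ t = W(t)`, where `W(t) = sin((n+1)t) cos t - (n+1) cos((n+1)t) sin t` is the
Wronskian of `sin((n+1)·)` and `sin`. Since `W' = ((n+1)² - 1) sin((n+1)t) sin t`, `W` increases
from `W(0) = 0` up to `π / (n+1)` and then decreases to `W(π/n) = n sin(π/n) cos(π/n)`, which is
positive because `π / n < π / 2`. For `x ≥ 1` the three-term recurrence gives
`U'_{m+1}(x) ≥ U'_m(x) + 2` by induction.
-/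

open Polynomial Polynomial.Chebyshev
open Real Set

noncomputable def sinWronskian (c t : ℝ) : ℝ :=
  sin (c * t) * cos t - c * cos (c * t) * sin t

theorem hasDerivAt_sinWronskian (c t : ℝ) :
    HasDerivAt (sinWronskian c) ((c ^ 2 - 1) * (sin (c * t) * sin t)) t := by
  have hct : HasDerivAt (c * ·) c t := by simpa using (hasDerivAt_id t).const_mul c
  exact ((hct.sin.mul (hasDerivAt_cos t)).sub ((hct.cos.const_mul c).mul (hasDerivAt_sin t))
    ).congr_deriv (by ring)

theorem continuous_sinWronskian (c : ℝ) : Continuous (sinWronskian c) := by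
  unfold sinWronskian; fun_prop

theorem derivative_U_eval_cos_mul_sin_pow_three (n : ℤ) (t : ℝ) :
    (derivative (U ℝ n)).eval (cos t) * sin t ^ 3 = sinWronskian (n + 1) t := by
  have hL : HasDerivAt (fun θ => (U ℝ n).eval (cos θ) * sin θ)
      ((derivative (U ℝ n)).eval (cos t) * -sin t * sin t + (U ℝ n).eval (cos t) * cos t) t :=
    (((U ℝ n).hasDerivAt (cos t)).comp t (hasDerivAt_cos t)).mul (hasDerivAt_sin t)
  have hR : HasDerivAt (fun θ => sin ((n + 1) * θ)) (cos ((n + 1) * t) * (n + 1)) t := by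
    simpa using ((hasDerivAt_id t).const_mul ((n : ℝ) + 1)).sin
  simp only [U_real_cos] at hL
  rw [sinWronskian]
  linear_combination (-sin t) * hL.unique hR + cos t * U_real_cos t n

theorem sinWronskian_pos_of_le_pi_div (c : ℝ) {t : ℝ} (hc : 1 < c) (ht₀ : 0 < t)
    (ht : t ≤ π / c) :
    0 < sinWronskian c t := by
  have hc₀ : 0 < c := by linarith
  have hmono : StrictMonoOn (sinWronskian c) (Icc 0 (π / c)) := by
    refine strictMonoOn_of_deriv_pos (convex_Icc _ _) (continuous_sinWronskian c).continuousOn ?_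
    rw [interior_Icc]
    rintro s ⟨hs₀, hs⟩
    rw [(hasDerivAt_sinWronskian c s).deriv]
    have hsin : 0 < sin s := sin_pos_of_pos_of_lt_pi hs₀ <| hs.trans_le <|
      div_le_self pi_pos.le hc.le
    have hsinc : 0 < sin (c * s) := sin_pos_of_pos_of_lt_pi (by positivity) <| by
      rwa [lt_div_iff₀' hc₀] at hs
    have : 0 < c ^ 2 - 1 := by nlinarith
    positivity
  simpa [sinWronskian] using hmono ⟨le_rfl, by positivity⟩ ⟨ht₀.le, ht⟩ ht₀

theorem sinWronskian_antitoneOn (c : ℝ) (hc : 2 ≤ c) :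
    AntitoneOn (sinWronskian c) (Icc (π / c) (π / (c - 1))) := by
  have hc₀ : 0 < c := by linarith
  have hc₁ : 0 < c - 1 := by linarith
  refine antitoneOn_of_deriv_nonpos (convex_Icc _ _) (continuous_sinWronskian c).continuousOn
    (fun s _ => (hasDerivAt_sinWronskian c s).differentiableAt.differentiableWithinAt) ?_
  rw [interior_Icc]
  rintro s ⟨hs₀, hs⟩
  rw [(hasDerivAt_sinWronskian c s).deriv]
  have hπs : π < c * s := by rwa [div_lt_iff₀' hc₀] at hs₀
  have hcs : c * s < 2 * π := by
    rw [lt_div_iff₀ hc₁] at hs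
    nlinarith [pi_pos]
  have hsin : 0 ≤ sin s := sin_nonneg_of_nonneg_of_le_pi (by nlinarith [pi_pos]) <|
    hs.le.trans <| div_le_self pi_pos.le (by linarith)
  have hsinc : sin (c * s) ≤ 0 := by
    rw [← sin_sub_two_pi]
    exact sin_nonpos_of_nonpos_of_neg_pi_le (by linarith) (by linarith)
  have : 0 ≤ c ^ 2 - 1 := by nlinarith
  exact mul_nonpos_of_nonneg_of_nonpos this (mul_nonpos_of_nonpos_of_nonneg hsinc hsin)

theorem sinWronskian_pos (c : ℝ) {t : ℝ} (hc : 3 < c) (ht : t ∈ Ioc 0 (π / (c - 1))) :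
    0 < sinWronskian c t := by
  rcases le_or_gt t (π / c) with hle | hlt
  · exact sinWronskian_pos_of_le_pi_div c (by linarith) ht.1 hle
  set a := π / (c - 1) with ha
  have hc₁ : 0 < c - 1 := by linarith
  have hca : c * a = a + π := by rw [ha]; field_simp; ring
  have ha₀ : 0 < a := by positivity
  have ha_lt : a < π / 2 := by rw [ha, div_lt_div_iff₀ hc₁ two_pos]; nlinarith [pi_pos]
  have hend : 0 < sinWronskian c a := by
    have hsin : 0 < sin a := sin_pos_of_pos_of_lt_pi ha₀ (by linarith [pi_pos])
    have hcos : 0 < cos a := cos_pos_of_mem_Ioo ⟨by linarith, ha_lt⟩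
    have : sinWronskian c a = (c - 1) * (sin a * cos a) := by
      rw [sinWronskian, hca, sin_add_pi, cos_add_pi]; ring
    rw [this]; positivity
  exact hend.trans_le <| sinWronskian_antitoneOn c (by linarith) ⟨hlt.le, ht.2⟩
    ⟨hlt.le.trans ht.2, le_rfl⟩ ht.2

theorem derivative_U_eval_pos_of_lt_one {n : ℕ} (hn : 2 < n) {x : ℝ} (hx : cos (π / n) < x)
    (hx₁ : x < 1) : 0 < (derivative (U ℝ n)).eval x := by
  have hn₀ : (0 : ℝ) < n := by positivity
  have hπn : π / n ≤ π := div_le_self pi_pos.le (by exact_mod_cast (by omega : 1 ≤ n))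
  set t := arccos x
  have hxt : cos t = x := cos_arccos ((neg_one_le_cos _).trans hx.le) hx₁.le
  have ht₀ : 0 < t := arccos_pos.2 hx₁
  have htn : t < π / n := by
    simpa [arccos_cos (by positivity) hπn] using
      arccos_lt_arccos (neg_one_le_cos _) hx hx₁.le
  have hsin : 0 < sin t := sin_pos_of_pos_of_lt_pi ht₀ (htn.trans_le hπn)
  have hW := sinWronskian_pos ((n : ℝ) + 1) (by norm_cast; omega)
    (t := t) ⟨ht₀, by simpa using htn.le⟩
  have h := derivative_U_eval_cos_mul_sin_pow_three n t
  rw [hxt] at h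
  push_cast at h
  exact pos_of_mul_pos_left (h ▸ hW) (by positivity)

section OneLe

variable {x : ℝ} (hx : 1 ≤ x)
include hx

theorem one_le_U_eval_le_U_eval_succ (m : ℕ) :
    1 ≤ (U ℝ m).eval x ∧ (U ℝ m).eval x ≤ (U ℝ (m + 1)).eval x := by
  induction m with
  | zero => norm_num [U_one]; linarith
  | succ k ih =>
    push_cast
    rw [add_assoc, one_add_one_eq_two, U_add_two]
    simp only [eval_sub, eval_mul, eval_X, eval_ofNat]
    refine ⟨ih.1.trans ih.2, ?_⟩
    nlinarith [ih.1, ih.2]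

theorem derivative_U_eval_add_two_le (m : ℕ) :
    0 ≤ (derivative (U ℝ m)).eval x ∧
      (derivative (U ℝ m)).eval x + 2 ≤ (derivative (U ℝ (m + 1))).eval x := by
  induction m with
  | zero => simp [U_one, derivative_mul]
  | succ k ih =>
    push_cast
    rw [add_assoc, one_add_one_eq_two, U_add_two]
    simp only [derivative_sub, derivative_mul, derivative_X, derivative_ofNat, eval_sub, eval_mul,
      eval_add, eval_X, eval_ofNat, zero_mul, zero_add, mul_one]
    have hU := (one_le_U_eval_le_U_eval_succ hx k).2
    have hU₁ := (one_le_U_eval_le_U_eval_succ hx (k + 1)).1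
    push_cast at hU₁
    refine ⟨by linarith, ?_⟩
    nlinarith [mul_nonneg (sub_nonneg.2 hx) (ih.1.trans (by linarith [ih.2]) :
      0 ≤ (derivative (U ℝ (k + 1))).eval x)]

theorem derivative_U_eval_pos_of_one_le {n : ℕ} (hn : 0 < n) :
    0 < (derivative (U ℝ n)).eval x := by
  obtain ⟨m, rfl⟩ : ∃ m, n = m + 1 := ⟨n - 1, by omega⟩
  have ⟨h₀, h₂⟩ := derivative_U_eval_add_two_le hx m
  push_cast at h₂ ⊢
  linarith

end OneLe

theorem derivative_U_eval_pos {n : ℕ} (hn : 2 < n) {x : ℝ} (hx : cos (π / n) < x) :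
    0 < (derivative (U ℝ n)).eval x := by
  rcases lt_or_ge x 1 with hx₁ | hx₁
  · exact derivative_U_eval_pos_of_lt_one hn hx hx₁
  · exact derivative_U_eval_pos_of_one_le hx₁ (by omega)

theorem stmt_9_general (n : ℕ) (hn2 : 2 < n) :
    (∀ x : ℝ, x ∈ Set.Ioo (Real.cos (Real.pi / n)) 1 →
      0 < (derivative (U ℝ (n : ℤ))).eval x) ∧
    (∀ x : ℝ, (derivative (U ℝ (n : ℤ))).eval x = 0 → x ≤ Real.cos (Real.pi / n)) :=
  ⟨fun _ hx => derivative_U_eval_pos hn2 hx.1,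
    fun _ hx => not_lt.1 fun h => (derivative_U_eval_pos hn2 h).ne' hx⟩

theorem stmt_9 (n : ℕ) (hn2 : 2 < n) (hne : Even n) :
    (∀ x : ℝ, x ∈ Set.Ioo (Real.cos (Real.pi / n)) 1 →
      0 < (derivative (U ℝ (n : ℤ))).eval x) ∧
    (∀ x : ℝ, (derivative (U ℝ (n : ℤ))).eval x = 0 → x ≤ Real.cos (Real.pi / n)) :=
  stmt_9_general n hn2
end

section
/- For every integer n ≥ 0, the sum from j = 0 to n of (U_j(cos(π/(n+2))))² equals (n+2)/(2·sin²(π/(n+2))). -/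
/- Since `U_j (cos θ) = sin ((j + 1) θ) / sin θ` with `θ = π / N`, `N = n + 2`, the sum is
`∑_{k < N} sin² (k π / N) / sin² θ`. Writing `sin² x = (1 - cos 2x) / 2`, the cosines are the real
parts of the `N`-th roots of unity, which sum to zero, so the numerator is `N / 2`. -/

open Polynomial Polynomial.Chebyshev Real Finset

theorem sum_range_cos_two_pi_mul_div {N : ℕ} (hN : 1 < N) :
    ∑ k ∈ range N, cos (2 * π * k / N) = 0 := by
  have hζ := Complex.isPrimitiveRoot_exp N (by omega)
  have hre := congrArg Complex.re (hζ.geom_sum_eq_zero hN)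
  rw [Complex.re_sum] at hre
  refine Eq.trans (sum_congr rfl fun k _ => ?_) hre
  rw [← Complex.exp_nat_mul, ← Complex.exp_ofReal_mul_I_re]
  congr 2
  push_cast
  ring

theorem sum_range_sin_sq_pi_mul_div {N : ℕ} (hN : 1 < N) :
    ∑ k ∈ range N, sin (k * (π / N)) ^ 2 = N / 2 := by
  have hangle (k : ℕ) : 2 * (k * (π / N)) = 2 * π * k / N := by ring
  simp_rw [sin_sq_eq_half_sub, hangle, sum_sub_distrib, ← sum_div, sum_range_cos_two_pi_mul_div hN]
  simp

theorem U_eval_cos_sq {θ : ℝ} (hθ : sin θ ≠ 0) (j : ℤ) :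
    (U ℝ j).eval (cos θ) ^ 2 = sin ((j + 1) * θ) ^ 2 / sin θ ^ 2 := by
  rw [← U_real_cos, mul_pow, mul_div_cancel_right₀ _ (pow_ne_zero 2 hθ)]

theorem stmt_10 (n : ℕ) :
    ∑ j ∈ Finset.range (n + 1), ((U ℝ (j : ℤ)).eval (Real.cos (Real.pi / (n + 2)))) ^ 2 =
      ((n : ℝ) + 2) / (2 * Real.sin (Real.pi / (n + 2)) ^ 2) := by
  have hsin : sin (π / (n + 2)) ≠ 0 := by
    have : (1 : ℝ) < n + 2 := by linarith [n.cast_nonneg (α := ℝ)]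
    exact (sin_pos_of_pos_of_lt_pi (by positivity) (div_lt_self pi_pos this)).ne'
  have hsum := sum_range_sin_sq_pi_mul_div (N := n + 2) (by omega)
  rw [sum_range_succ', Nat.cast_zero, zero_mul, sin_zero, zero_pow two_ne_zero, add_zero] at hsum
  push_cast at hsum
  simp_rw [U_eval_cos_sq hsin, Int.cast_natCast, ← sum_div]
  rw [hsum, div_div]
end

section
/- Let P_max(z) = z/(1 - 2z·cos(2π/(N+3)) + z²) + (4/(N+3))·sin²(2π/(N+3))·z³/(1-z²)·(1-z^{N+3})/(1 - 2z·cos(2π/(N+3)) + z²)², where N is an odd positive integer. Then for all t ∈ (0, π), Im(P_max(e^{it})) = (sin²(2π/(N+3))/(N+3)) · (1/sin t) · sin²((N+3)t/2) / (cos t - cos(2π/(N+3)))², provided e^{it} is not a pole (i.e. cos t ≠ cos(2π/(N+3)) and sin t ≠ 0); in particular Im(P_max(e^{it})) ≥ 0 for all such t. -/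
open Complex

lemma e2lem (s st Mr : ℝ) (z w d : ℂ) (hM : (Mr:ℂ) ≠ 0) (hz : z ≠ 0)
    (hst : (st:ℂ) ≠ 0) (hd : d ≠ 0) :
    4/(Mr:ℂ)*(s:ℂ)^2*z^3*(I/(2*(st:ℂ)*z))*(1-w)/(2*d*z)^2
      = (s:ℂ)^2/Mr/(2*st*d^2) * ((1-w)*I) := by
  rw [div_eq_iff (pow_ne_zero 2 (mul_ne_zero (mul_ne_zero two_ne_zero hd) hz)), div_div]
  field_simp
  ring

lemma key_s17 (c s ct st Mr : ℝ) (z w : ℂ) (hM : (Mr:ℂ) ≠ 0) (hz : z ≠ 0)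
    (hst : (st:ℂ) ≠ 0) (hcc : (ct:ℂ) - c ≠ 0)
    (h1 : 1 - 2*z*(c:ℂ) + z^2 = 2*((ct:ℂ)-c)*z)
    (h2 : 1 - z^2 = -(2*(st:ℂ))*I*z) :
    z / (1 - 2*z*(c:ℂ) + z^2) + (4/(Mr:ℂ))*(s:ℂ)^2*z^3/(1-z^2)*(1-w)/(1-2*z*(c:ℂ)+z^2)^2
    = ((1/(2*(ct-c)) : ℝ) : ℂ) + ((s^2/Mr/(2*st*(ct-c)^2) : ℝ) : ℂ) * ((1-w)*I) := by
  have h2z : (2 : ℂ) ≠ 0 := two_ne_zero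
  have h2i : (1 - z^2)⁻¹ = I / (2*(st:ℂ)*z) := by
    refine inv_eq_of_mul_eq_one_right ?_
    rw [h2, mul_div_assoc', mul_comm, div_eq_iff (mul_ne_zero (mul_ne_zero h2z hst) hz)]
    linear_combination (-2*(st:ℂ)*z) * Complex.I_sq
  rw [div_eq_mul_inv ((4/(Mr:ℂ))*(s:ℂ)^2*z^3) (1-z^2), h2i, h1]
  push_cast
  have e1 : z / (2*((ct:ℂ)-c)*z) = 1/(2*((ct:ℂ)-c)) := by
    rw [div_eq_div_iff (by exact mul_ne_zero (mul_ne_zero h2z hcc) hz)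
      (mul_ne_zero h2z hcc)]
    ring
  rw [e1, e2lem s st Mr z w _ hM hz hst hcc]

theorem stmt_17 (N : ℕ) (hN : Odd N) (hNpos : 0 < N)
    (Pmax : ℂ → ℂ)
    (hP : ∀ z : ℂ, Pmax z =
      z / (1 - 2 * z * (Real.cos (2 * Real.pi / (N + 3)) : ℂ) + z ^ 2) +
      (4 / ((N : ℂ) + 3)) * ((Real.sin (2 * Real.pi / (N + 3)) : ℂ)) ^ 2 *
        z ^ 3 / (1 - z ^ 2) * (1 - z ^ (N + 3)) /
        (1 - 2 * z * (Real.cos (2 * Real.pi / (N + 3)) : ℂ) + z ^ 2) ^ 2)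
    (t : ℝ) (ht0 : 0 < t) (htπ : t < Real.pi)
    (hne : Real.cos t ≠ Real.cos (2 * Real.pi / (N + 3))) :
    (Pmax (exp (t * I))).im =
      (Real.sin (2 * Real.pi / (N + 3)) ^ 2 / (N + 3)) * (1 / Real.sin t) *
        (Real.sin ((N + 3) * t / 2) ^ 2 /
          (Real.cos t - Real.cos (2 * Real.pi / (N + 3))) ^ 2) ∧
    0 ≤ (Pmax (exp (t * I))).im := by
  set c : ℝ := Real.cos (2 * Real.pi / (N + 3)) with hc
  set s : ℝ := Real.sin (2 * Real.pi / (N + 3)) with hs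
  set ct : ℝ := Real.cos t with hct
  set st : ℝ := Real.sin t with hstdef
  set Mr : ℝ := (N:ℝ) + 3 with hMr
  set z : ℂ := Complex.exp (t * I) with hzdef
  have hstpos : 0 < st := Real.sin_pos_of_pos_of_lt_pi ht0 htπ
  have hstC : (st:ℂ) ≠ 0 := by exact_mod_cast hstpos.ne'
  have hccR : ct - c ≠ 0 := sub_ne_zero.mpr hne
  have hccC : (ct:ℂ) - c ≠ 0 := by exact_mod_cast hccR
  have hMrpos : 0 < Mr := by positivity
  have hMC : (Mr:ℂ) ≠ 0 := by exact_mod_cast hMrpos.ne'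
  have hz : z ≠ 0 := Complex.exp_ne_zero _
  have hze : z = (ct:ℂ) + st*I := by
    rw [hzdef, Complex.exp_mul_I, ← Complex.ofReal_cos, ← Complex.ofReal_sin]
  have hpyC : (st:ℂ)^2 + (ct:ℂ)^2 = 1 := by exact_mod_cast Real.sin_sq_add_cos_sq t
  have h1 : 1 - 2*z*(c:ℂ) + z^2 = 2*((ct:ℂ)-c)*z := by
    rw [hze]
    linear_combination (-1:ℂ) * hpyC + (st:ℂ)^2 * Complex.I_sq
  have h2 : 1 - z^2 = -(2*(st:ℂ))*I*z := by
    rw [hze]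
    linear_combination (-1:ℂ) * hpyC + (st:ℂ)^2 * Complex.I_sq
  have hMcast : ((Mr:ℝ):ℂ) = (N:ℂ) + 3 := by push_cast [hMr]; ring
  have hw : (z ^ (N+3)).re = Real.cos (Mr * t) := by
    have : z ^ (N+3) = Complex.exp ((Mr * t : ℝ) * I) := by
      rw [hzdef, ← Complex.exp_nat_mul]
      congr 1
      push_cast [hMr]
      ring
    rw [this, Complex.exp_ofReal_mul_I_re]
  have hkey := key_s17 c s ct st Mr z (z ^ (N+3)) hMC hz hstC hccC h1 h2
  rw [hMcast] at hkey
  have him : (Pmax z).im = (s^2/Mr/(2*st*(ct-c)^2)) * (1 - Real.cos (Mr * t)) := by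
    rw [hP z, hkey]
    simp only [Complex.add_im, Complex.ofReal_im, Complex.ofReal_re, Complex.mul_im,
      Complex.I_im, Complex.I_re, Complex.sub_re, Complex.sub_im, Complex.one_re,
      Complex.one_im, hw, zero_add, zero_mul, add_zero, mul_zero, mul_one, mul_zero]
  have htrig : 1 - Real.cos (Mr * t) = 2 * Real.sin (Mr * t / 2) ^ 2 := by
    have h := Real.cos_two_mul (Mr * t / 2)
    rw [show 2 * (Mr * t / 2) = Mr * t by ring] at h
    have := Real.sin_sq_add_cos_sq (Mr * t / 2)
    linarith
  have hval : (Pmax z).im =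
      (s ^ 2 / Mr) * (1 / st) * (Real.sin (Mr * t / 2) ^ 2 / (ct - c) ^ 2) := by
    rw [him, htrig]
    field_simp
  have hgoalform : Real.sin ((↑N + 3) * t / 2) = Real.sin (Mr * t / 2) := by rw [hMr]
  constructor
  · rw [hval, hgoalform, hMr]
  · rw [hval]
    have h1n : 0 ≤ 1 / st := by positivity
    have h2n : 0 ≤ s ^ 2 / Mr := by positivity
    positivity
end
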